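/- If x, y, z > 1 are real numbers with 1 + 2xyz − x² − y² − z² > 0, then arccosh x < arccosh y + arccosh z (and similarly for the other permutations). -/

import Mathlib

/-!
By the addition formula for `cosh`, `arcosh y + arcosh z = arcosh (y z + √(y² - 1) √(z² - 1))`,
so by monotonicity of `arcosh` the triangle inequality says `x - y z < √(y² - 1) √(z² - 1)`.
This follows from the identity
`(y² - 1)(z² - 1) - (x - y z)² = 1 + 2 x y z - x² - y² - z²`,
whose right-hand side is the Gram determinant, and the same holds for every permutation of
`x, y, z` since the determinant is symmetric.
-/

/-- The inverse of `Real.cosh` on `[1, ∞)`. -/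
noncomputable def arcosh (t : ℝ) : ℝ := Real.log (t + Real.sqrt (t ^ 2 - 1))

theorem arcosh_eq_real_arcosh : arcosh = Real.arcosh := rfl

theorem sub_mul_sq_lt_of_gram_pos {x y z : ℝ}
    (h : 0 < 1 + 2 * x * y * z - x ^ 2 - y ^ 2 - z ^ 2) :
    (x - y * z) ^ 2 < (y ^ 2 - 1) * (z ^ 2 - 1) := by
  linear_combination h

theorem lt_mul_add_sqrt_mul_sqrt_of_gram_pos {x y z : ℝ} (hy : 1 ≤ y ^ 2)
    (h : 0 < 1 + 2 * x * y * z - x ^ 2 - y ^ 2 - z ^ 2) :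
    x < y * z + √(y ^ 2 - 1) * √(z ^ 2 - 1) := by
  rw [← Real.sqrt_mul (by linarith)]
  linarith [Real.lt_sqrt_of_sq_lt (sub_mul_sq_lt_of_gram_pos h)]

theorem arcosh_lt_arcosh_add_arcosh_iff {x y z : ℝ} (hx : 1 ≤ x) (hy : 1 ≤ y) (hz : 1 ≤ z) :
    arcosh x < arcosh y + arcosh z ↔ x < y * z + √(y ^ 2 - 1) * √(z ^ 2 - 1) := by
  have hsum : 0 ≤ Real.arcosh y + Real.arcosh z :=
    add_nonneg (Real.arcosh_nonneg hy) (Real.arcosh_nonneg hz)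
  rw [arcosh_eq_real_arcosh, ← abs_of_nonneg (Real.arcosh_nonneg hx), ← abs_of_nonneg hsum,
    ← Real.cosh_lt_cosh, Real.cosh_add, Real.cosh_arcosh hx, Real.cosh_arcosh hy,
    Real.cosh_arcosh hz, Real.sinh_arcosh hy, Real.sinh_arcosh hz]

theorem arcosh_lt_arcosh_add_arcosh_of_gram_pos {x y z : ℝ}
    (hx : 1 ≤ x) (hy : 1 ≤ y) (hz : 1 ≤ z)
    (h : 0 < 1 + 2 * x * y * z - x ^ 2 - y ^ 2 - z ^ 2) :
    arcosh x < arcosh y + arcosh z :=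
  (arcosh_lt_arcosh_add_arcosh_iff hx hy hz).2 <|
    lt_mul_add_sqrt_mul_sqrt_of_gram_pos (one_le_pow₀ hy) h

theorem gram_pos_triangle_ineq (x y z : ℝ)
    (hx : 1 < x) (hy : 1 < y) (hz : 1 < z)
    (h : 0 < 1 + 2 * x * y * z - x ^ 2 - y ^ 2 - z ^ 2) :
    arcosh x < arcosh y + arcosh z ∧
    arcosh y < arcosh x + arcosh z ∧
    arcosh z < arcosh x + arcosh y := by
  refine ⟨arcosh_lt_arcosh_add_arcosh_of_gram_pos hx.le hy.le hz.le h,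
    arcosh_lt_arcosh_add_arcosh_of_gram_pos hy.le hx.le hz.le ?_,
    arcosh_lt_arcosh_add_arcosh_of_gram_pos hz.le hx.le hy.le ?_⟩ <;>
  linear_combination h
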